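/- Let ε > 0, ξ > 0, and define z(ξ₁) = s_ε(ξ₁) + s_ε(ξ - ξ₁) where s_ε(η) = (η/ε²)(√(1+ε²η²)-1). Then for all ξ₁ ≥ ξ/2, the derivative satisfies z'(ξ₁) = ξ(2ξ₁ - ξ) · (2⟨εξ₁⟩⟨ε(ξ-ξ₁)⟩ + 1) / (⟨εξ₁⟩⟨ε(ξ-ξ₁)⟩(⟨εξ₁⟩ + ⟨ε(ξ-ξ₁)⟩)) ≥ ξ(2ξ₁ - ξ)/⟨εξ₁⟩. In particular, z is strictly increasing on (ξ/2, ∞). -/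

import Mathlib

/-!
Differentiating `s_ε` gives `s_ε'(η) = (⟨εη⟩ - 1)/ε² + η²/⟨εη⟩`, and with `a = ⟨εp⟩`, `b = ⟨εq⟩`
the relations `a² - b² = ε²(p² - q²)` turn `s_ε'(p) - s_ε'(q)` into
`(p² - q²)(2ab + 1)/(ab(a + b))`; for `p = ξ₁`, `q = ξ - ξ₁` one has `p² - q² = ξ(2ξ₁ - ξ)`.
For `ξ₁ ≥ ξ/2` we have `|ξ - ξ₁| ≤ ξ₁`, so `b ≤ a`, and then `(2ab + 1)/(b(a + b)) ≥ 1`.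
-/

noncomputable def jb (x : ℝ) : ℝ := Real.sqrt (1 + x ^ 2)

noncomputable def sB (ε ξ : ℝ) : ℝ := ξ / ε ^ 2 * (jb (ε * ξ) - 1)

lemma jb_pos (x : ℝ) : 0 < jb x := Real.sqrt_pos.2 (by positivity)

lemma jb_sq (x : ℝ) : jb x ^ 2 = 1 + x ^ 2 := Real.sq_sqrt (by positivity)

lemma jb_le_jb_of_abs_le {x y : ℝ} (h : |x| ≤ |y|) : jb x ≤ jb y :=
  Real.sqrt_le_sqrt (by nlinarith [sq_le_sq.2 h])

lemma hasDerivAt_jb (x : ℝ) : HasDerivAt jb (x / jb x) x := by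
  have h : HasDerivAt (fun y : ℝ => 1 + y ^ 2) (2 * x) x := by
    simpa using (hasDerivAt_pow 2 x).const_add 1
  refine (h.sqrt (by positivity)).congr_deriv ?_
  rw [jb, mul_div_mul_left _ _ two_ne_zero]

lemma hasDerivAt_sB {ε : ℝ} (hε : ε ≠ 0) (x : ℝ) :
    HasDerivAt (sB ε) ((jb (ε * x) - 1) / ε ^ 2 + x ^ 2 / jb (ε * x)) x := by
  have hscale : HasDerivAt (fun y : ℝ => jb (ε * y)) (ε * x / jb (ε * x) * ε) x :=
    (hasDerivAt_jb (ε * x)).comp x (by simpa using (hasDerivAt_id x).const_mul ε)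
  refine (((hasDerivAt_id x).div_const (ε ^ 2)).mul (hscale.sub_const 1)).congr_deriv ?_
  have := (jb_pos (ε * x)).ne'
  simp only [id]
  field_simp

lemma sB_deriv_sub_sB_deriv {ε : ℝ} (hε : ε ≠ 0) (p q : ℝ) :
    ((jb (ε * p) - 1) / ε ^ 2 + p ^ 2 / jb (ε * p)) -
      ((jb (ε * q) - 1) / ε ^ 2 + q ^ 2 / jb (ε * q)) =
    (p ^ 2 - q ^ 2) * (2 * jb (ε * p) * jb (ε * q) + 1) /
      (jb (ε * p) * jb (ε * q) * (jb (ε * p) + jb (ε * q))) := by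
  have ha := jb_pos (ε * p)
  have hb := jb_pos (ε * q)
  have ha2 := jb_sq (ε * p)
  have hb2 := jb_sq (ε * q)
  set a := jb (ε * p)
  set b := jb (ε * q)
  have hab : a + b ≠ 0 := by positivity
  field_simp
  linear_combination (2 * a * b + 1 - b * (a + b)) * ha2 + (a * (a + b) - (2 * a * b + 1)) * hb2

lemma hasDerivAt_sB_add_sB_sub {ε : ℝ} (hε : ε ≠ 0) (ξ ξ₁ : ℝ) :
    HasDerivAt (fun η => sB ε η + sB ε (ξ - η))
      (ξ * (2 * ξ₁ - ξ) * (2 * jb (ε * ξ₁) * jb (ε * (ξ - ξ₁)) + 1) /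
        (jb (ε * ξ₁) * jb (ε * (ξ - ξ₁)) * (jb (ε * ξ₁) + jb (ε * (ξ - ξ₁))))) ξ₁ := by
  have hreflect : HasDerivAt (fun η : ℝ => ξ - η) (-1) ξ₁ := by
    simpa using (hasDerivAt_id ξ₁).const_sub ξ
  refine ((hasDerivAt_sB hε ξ₁).add ((hasDerivAt_sB hε (ξ - ξ₁)).comp ξ₁ hreflect)).congr_deriv ?_
  rw [show ξ * (2 * ξ₁ - ξ) = ξ₁ ^ 2 - (ξ - ξ₁) ^ 2 by ring, ← sB_deriv_sub_sB_deriv hε]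
  ring

lemma div_le_mul_two_mul_add_one_div {a b c : ℝ} (hb : 0 < b) (hba : b ≤ a) (hc : 0 ≤ c) :
    c / a ≤ c * (2 * a * b + 1) / (a * b * (a + b)) := by
  have ha : 0 < a := hb.trans_le hba
  rw [div_le_div_iff₀ ha (by positivity)]
  nlinarith [mul_nonneg (mul_nonneg hc ha.le) (by nlinarith : (0 : ℝ) ≤ a * b + 1 - b ^ 2)]

theorem stmt_5 (ε ξ : ℝ) (hε : 0 < ε) (hξ : 0 < ξ) :
    (∀ ξ₁ : ℝ, ξ / 2 ≤ ξ₁ →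
      HasDerivAt (fun η => sB ε η + sB ε (ξ - η))
        (ξ * (2 * ξ₁ - ξ) * (2 * jb (ε * ξ₁) * jb (ε * (ξ - ξ₁)) + 1) /
          (jb (ε * ξ₁) * jb (ε * (ξ - ξ₁)) * (jb (ε * ξ₁) + jb (ε * (ξ - ξ₁))))) ξ₁ ∧
      ξ * (2 * ξ₁ - ξ) / jb (ε * ξ₁) ≤
        ξ * (2 * ξ₁ - ξ) * (2 * jb (ε * ξ₁) * jb (ε * (ξ - ξ₁)) + 1) /
          (jb (ε * ξ₁) * jb (ε * (ξ - ξ₁)) * (jb (ε * ξ₁) + jb (ε * (ξ - ξ₁))))) ∧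
    StrictMonoOn (fun η => sB ε η + sB ε (ξ - η)) (Set.Ioi (ξ / 2)) := by
  have hder := hasDerivAt_sB_add_sB_sub hε.ne' ξ
  refine ⟨fun ξ₁ hξ₁ => ⟨hder ξ₁, ?_⟩, ?_⟩
  · have hreflect_le : |ε * (ξ - ξ₁)| ≤ |ε * ξ₁| := by
      rw [abs_mul, abs_mul, abs_of_nonneg (show 0 ≤ ξ₁ by linarith)]
      exact mul_le_mul_of_nonneg_left (abs_le.2 ⟨by linarith, by linarith⟩) (abs_nonneg ε)
    exact div_le_mul_two_mul_add_one_div (jb_pos _) (jb_le_jb_of_abs_le hreflect_le)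
      (mul_nonneg hξ.le (by linarith))
  · refine strictMonoOn_of_hasDerivWithinAt_pos (convex_Ioi _)
      (fun x _ => (hder x).continuousAt.continuousWithinAt)
      (fun x _ => (hder x).hasDerivWithinAt) fun x hx => ?_
    rw [interior_Ioi] at hx
    have ha := jb_pos (ε * x)
    have hb := jb_pos (ε * (ξ - x))
    exact div_pos (mul_pos (mul_pos hξ (by linarith [Set.mem_Ioi.1 hx])) (by positivity))
      (by positivity)
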